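/- arXiv:2404.02664 — 3 statements merged into one kernel-verified Lean document; each statement's English description precedes it below -/
import Mathlib

section
/- Let w ∈ ℝ and let f be a complex function analytic on the closed upper half plane {z : Im z ≥ 0} such that sup_{t ∈ [0,π]} |f(w + R·e^{it})| → 0 as R → ∞. Then the principal value integral ∫_{-∞}^{∞} f(x)/(x − w) dx exists and equals iπ·f(w). -/
/-!
Write `f x / (x - w) = g x + f w / (x - w)` with `g = dslope f w`, which is holomorphic on a
neighbourhood of the closed upper half-plane. The odd part `f w / (x - w)` cancels between the two
halves, so the truncated principal value is `∫_{w-R}^{w+R} g - ∫_{w-r}^{w+r} g`, and the second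
integral tends to `0` with `r`. By Cauchy's theorem on the rectangle `[w - R, w + R] × [0, R]`, the
first integral equals the integral of `g = f / (z - w) - f w / (z - w)` over the other three sides.
These sides have length `4R` and stay at distance `≥ R` from `w`, where the decay hypothesis makes
`f` uniformly small, so the first part tends to `0`; the second is `-f w` times the integral of
`1 / (z - w)` from `w - R` to `w + R` over the upper half, which is `-iπ`.
-/

open Complex intervalIntegral Filter Topology

theorem integral_inv_sub_add_integral_inv_sub (w r R : ℝ) :
    (∫ x in (w - R)..(w - r), ((x : ℂ) - w)⁻¹) +
      ∫ x in (w + r)..(w + R), ((x : ℂ) - w)⁻¹ = 0 := by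
  have hreflect := integral_comp_sub_left (fun x : ℝ => ((x : ℂ) - w)⁻¹)
    (a := w + r) (b := w + R) (2 * w)
  have hodd (x : ℝ) : (((2 * w - x : ℝ) : ℂ) - w)⁻¹ = -((x : ℂ) - w)⁻¹ := by
    rw [← inv_neg]; push_cast; ring_nf
  simp only [hodd, integral_neg] at hreflect
  rw [show 2 * w - (w + R) = w - R by ring, show 2 * w - (w + r) = w - r by ring] at hreflect
  rw [← hreflect, neg_add_cancel]

theorem integral_div_sub_eq (f : ℂ → ℂ) {w a b : ℝ} (hw : w ∉ Set.uIcc a b)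
    (hg : Continuous fun x : ℝ => dslope f w x) :
    ∫ x in a..b, f x / (x - w) =
      (∫ x in a..b, dslope f w x) + f w * ∫ x in a..b, ((x : ℂ) - w)⁻¹ := by
  have hne : ∀ x ∈ Set.uIcc a b, (x : ℂ) - w ≠ 0 := fun x hx =>
    sub_ne_zero.2 (by exact_mod_cast ne_of_mem_of_not_mem hx hw)
  have hinv : ContinuousOn (fun x : ℝ => ((x : ℂ) - w)⁻¹) (Set.uIcc a b) :=
    (by fun_prop : Continuous fun x : ℝ => (x : ℂ) - w).continuousOn.inv₀ hne
  rw [← integral_const_mul,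
    ← integral_add (hg.intervalIntegrable a b) (hinv.intervalIntegrable.const_mul _)]
  refine integral_congr fun x hx => ?_
  rw [dslope_of_ne f (sub_ne_zero.1 (hne x hx)), slope_def_field]
  field_simp
  ring

theorem pv_integral_eq_integral_dslope_sub (f : ℂ → ℂ) {w r R : ℝ} (hr : 0 < r) (hR : 0 < R)
    (hg : Continuous fun x : ℝ => dslope f w x) :
    (∫ x in (w - R)..(w - r), f x / (x - w)) + ∫ x in (w + r)..(w + R), f x / (x - w) =
      (∫ x in (w - R)..(w + R), dslope f w x) - ∫ x in (w - r)..(w + r), dslope f w x := by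
  have hleft : w ∉ Set.uIcc (w - R) (w - r) := fun h => by
    rcases Set.mem_uIcc.1 h with h | h <;> linarith [h.1, h.2]
  have hright : w ∉ Set.uIcc (w + r) (w + R) := fun h => by
    rcases Set.mem_uIcc.1 h with h | h <;> linarith [h.1, h.2]
  rw [integral_div_sub_eq f hleft hg, integral_div_sub_eq f hright hg,
    integral_interval_sub_interval_comm (hg.intervalIntegrable _ _) (hg.intervalIntegrable _ _)
      (hg.intervalIntegrable _ _), integral_symm (w + R)]
  linear_combination f w * integral_inv_sub_add_integral_inv_sub w r R

theorem tendsto_integral_sub_add_nhds_zero {E : Type*} [NormedAddCommGroup E] [NormedSpace ℝ E]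
    [CompleteSpace E] {g : ℝ → E}
    (hint : ∀ b c, IntervalIntegrable g MeasureTheory.volume b c)
    (a : ℝ) : Tendsto (fun r => ∫ x in (a - r)..(a + r), g x) (𝓝 0) (𝓝 0) := by
  have hprim := continuous_primitive hint a
  have hcont : Continuous fun r => (∫ x in a..(a + r), g x) - ∫ x in a..(a - r), g x := by
    fun_prop
  have h0 := hcont.tendsto 0
  simp only [add_zero, sub_zero, sub_self] at h0
  exact h0.congr fun r => integral_interval_sub_left (hint _ _) (hint _ _)

def halfPlaneOutsideBall (w R : ℝ) : Set ℂ :=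
  {z : ℂ | 0 ≤ z.im} \ Metric.ball (w : ℂ) R

theorem mem_halfPlaneOutsideBall {w R : ℝ} {z : ℂ} :
    z ∈ halfPlaneOutsideBall w R ↔ 0 ≤ z.im ∧ R ≤ ‖z - w‖ := by
  simp [halfPlaneOutsideBall, dist_eq_norm]

noncomputable def semicircleSup (f : ℂ → ℂ) (w R : ℝ) : ℝ :=
  ⨆ t ∈ Set.Icc (0 : ℝ) Real.pi, ‖f (w + R * exp (I * t))‖

theorem norm_le_semicircleSup {f : ℂ → ℂ} (w : ℝ) (hf : ContinuousOn f {z | 0 ≤ z.im})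
    {z : ℂ} (hz : 0 ≤ z.im) : ‖f z‖ ≤ semicircleSup f w ‖z - w‖ := by
  set F : ℝ → ℝ := fun t => ‖f (w + ‖z - w‖ * exp (I * t))‖
  have hsemicircle (t : ℝ) (ht : t ∈ Set.Icc 0 Real.pi) :
      0 ≤ ((w : ℂ) + ‖z - w‖ * exp (I * t)).im := by
    rw [mul_comm I]
    simp only [add_im, ofReal_im, zero_add, im_ofReal_mul, exp_ofReal_mul_I_im]
    exact mul_nonneg (norm_nonneg _) (Real.sin_nonneg_of_nonneg_of_le_pi ht.1 ht.2)
  have hbdd : BddAbove (F '' Set.Icc 0 Real.pi) :=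
    isCompact_Icc.bddAbove_image <| continuous_norm.comp_continuousOn <|
      hf.comp (by fun_prop) hsemicircle
  have harg : arg (z - w) ∈ Set.Icc 0 Real.pi :=
    ⟨arg_nonneg_iff.2 (by simpa using hz), arg_le_pi _⟩
  have hz_eq : (w : ℂ) + ‖z - w‖ * exp (I * arg (z - w)) = z := by
    rw [mul_comm I, norm_mul_exp_arg_mul_I]; ring
  have hsup : ⨆ t : Set.Icc (0 : ℝ) Real.pi, F t = semicircleSup f w ‖z - w‖ := by
    refine ciSup_subtype_fun (by rwa [← Set.image_eq_range]) ?_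
    rw [Real.sSup_empty]
    exact (norm_nonneg _).trans (le_ciSup_set hbdd harg)
  calc ‖f z‖ = F (arg (z - w)) := by simp only [F, hz_eq]
    _ ≤ ⨆ t : Set.Icc (0 : ℝ) Real.pi, F t := le_ciSup_set hbdd harg
    _ = semicircleSup f w ‖z - w‖ := hsup

theorem eventually_norm_le_of_tendsto_semicircleSup {f : ℂ → ℂ} {w : ℝ}
    (hf : ContinuousOn f {z | 0 ≤ z.im}) (hdecay : Tendsto (semicircleSup f w) atTop (𝓝 0))
    {ε : ℝ} (hε : 0 < ε) :
    ∀ᶠ R in atTop, ∀ z ∈ halfPlaneOutsideBall w R, ‖f z‖ ≤ ε := by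
  obtain ⟨R₀, hR₀⟩ := eventually_atTop.1 (hdecay.eventually (eventually_le_nhds hε))
  filter_upwards [eventually_ge_atTop R₀] with R hR z hz
  obtain ⟨hz, hRz⟩ := mem_halfPlaneOutsideBall.1 hz
  exact (norm_le_semicircleSup w hf hz).trans (hR₀ _ (hR.trans hRz))

/-- The integral of `g` from `w - R` to `w + R` along the path that goes up, across and down the
other three sides of the rectangle `[w - R, w + R] × [0, R]`. -/
noncomputable def upperRectIntegral (g : ℂ → ℂ) (w R : ℝ) : ℂ :=
  I * (∫ y in (0 : ℝ)..R, g ((w - R : ℝ) + y * I)) +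
    (∫ x in (w - R)..(w + R), g (x + R * I)) -
    I * ∫ y in (0 : ℝ)..R, g ((w + R : ℝ) + y * I)

section upperRectIntegral

variable {w R : ℝ}

theorem upperRect_sides_mem_halfPlaneOutsideBall (hR : 0 ≤ R) :
    (∀ y ∈ Set.uIcc 0 R, ((w - R : ℝ) : ℂ) + y * I ∈ halfPlaneOutsideBall w R) ∧
    (∀ x : ℝ, (x : ℂ) + R * I ∈ halfPlaneOutsideBall w R) ∧
    (∀ y ∈ Set.uIcc 0 R, ((w + R : ℝ) : ℂ) + y * I ∈ halfPlaneOutsideBall w R) := by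
  simp only [mem_halfPlaneOutsideBall, Set.uIcc_of_le hR]
  refine ⟨fun y hy => ⟨by simpa using hy.1, ?_⟩, fun x => ⟨by simpa using hR, ?_⟩,
    fun y hy => ⟨by simpa using hy.1, ?_⟩⟩
  · exact le_trans (by simp [abs_of_nonneg hR]) (abs_re_le_norm _)
  · exact le_trans (by simp [abs_of_nonneg hR]) (abs_im_le_norm _)
  · exact le_trans (by simp [abs_of_nonneg hR]) (abs_re_le_norm _)

theorem upperRectIntegral_congr {g₁ g₂ : ℂ → ℂ} (hR : 0 ≤ R)
    (h : Set.EqOn g₁ g₂ (halfPlaneOutsideBall w R)) :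
    upperRectIntegral g₁ w R = upperRectIntegral g₂ w R := by
  obtain ⟨hleft, htop, hright⟩ := upperRect_sides_mem_halfPlaneOutsideBall (w := w) hR
  unfold upperRectIntegral
  rw [integral_congr fun y hy => h (hleft y hy), integral_congr fun x _ => h (htop x),
    integral_congr fun y hy => h (hright y hy)]

theorem upperRectIntegral_sub {g₁ g₂ : ℂ → ℂ} (hR : 0 ≤ R)
    (h₁ : ContinuousOn g₁ (halfPlaneOutsideBall w R))
    (h₂ : ContinuousOn g₂ (halfPlaneOutsideBall w R)) :
    upperRectIntegral (fun z => g₁ z - g₂ z) w R =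
      upperRectIntegral g₁ w R - upperRectIntegral g₂ w R := by
  obtain ⟨hleft, htop, hright⟩ := upperRect_sides_mem_halfPlaneOutsideBall (w := w) hR
  have hint {g : ℂ → ℂ} (hg : ContinuousOn g (halfPlaneOutsideBall w R)) :
      IntervalIntegrable (fun y : ℝ => g ((w - R : ℝ) + y * I)) MeasureTheory.volume 0 R ∧
      IntervalIntegrable (fun x : ℝ => g (x + R * I)) MeasureTheory.volume (w - R) (w + R) ∧
      IntervalIntegrable (fun y : ℝ => g ((w + R : ℝ) + y * I)) MeasureTheory.volume 0 R :=
    ⟨(hg.comp (by fun_prop) hleft).intervalIntegrable,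
      (hg.comp (by fun_prop) fun x _ => htop x).intervalIntegrable,
      (hg.comp (by fun_prop) hright).intervalIntegrable⟩
  obtain ⟨hl₁, ht₁, hr₁⟩ := hint h₁
  obtain ⟨hl₂, ht₂, hr₂⟩ := hint h₂
  unfold upperRectIntegral
  rw [integral_sub hl₁ hl₂, integral_sub ht₁ ht₂, integral_sub hr₁ hr₂]
  ring

theorem upperRectIntegral_const_mul (c : ℂ) (g : ℂ → ℂ) :
    upperRectIntegral (fun z => c * g z) w R = c * upperRectIntegral g w R := by
  simp only [upperRectIntegral, integral_const_mul]
  ring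

theorem norm_upperRectIntegral_le {g : ℂ → ℂ} {C : ℝ} (hR : 0 ≤ R)
    (hg : ∀ z ∈ halfPlaneOutsideBall w R, ‖g z‖ ≤ C) :
    ‖upperRectIntegral g w R‖ ≤ 4 * R * C := by
  obtain ⟨hleft, htop, hright⟩ := upperRect_sides_mem_halfPlaneOutsideBall (w := w) hR
  have hside (v : ℝ)
      (hv : ∀ y ∈ Set.uIcc 0 R, (v : ℂ) + y * I ∈ halfPlaneOutsideBall w R) :
      ‖I * ∫ y in (0 : ℝ)..R, g (v + y * I)‖ ≤ C * R := by
    rw [norm_mul, norm_I, one_mul]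
    simpa [abs_of_nonneg hR] using norm_integral_le_of_norm_le_const fun y hy =>
      hg _ (hv y (Set.uIoc_subset_uIcc hy))
  have htop' : ‖∫ x in (w - R)..(w + R), g (x + R * I)‖ ≤ C * (2 * R) := by
    have := norm_integral_le_of_norm_le_const (a := w - R) (b := w + R) fun x _ => hg _ (htop x)
    rwa [show w + R - (w - R) = 2 * R by ring, abs_of_nonneg (by linarith)] at this
  calc ‖upperRectIntegral g w R‖
      ≤ ‖I * ∫ y in (0 : ℝ)..R, g ((w - R : ℝ) + y * I)‖ +
          ‖∫ x in (w - R)..(w + R), g (x + R * I)‖ +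
          ‖I * ∫ y in (0 : ℝ)..R, g ((w + R : ℝ) + y * I)‖ :=
        norm_sub_le_of_le (norm_add_le _ _) le_rfl
    _ ≤ C * R + C * (2 * R) + C * R := by
        gcongr <;> [exact hside _ hleft; exact hside _ hright]
    _ = 4 * R * C := by ring

theorem integral_eq_upperRectIntegral {g : ℂ → ℂ}
    (hg : DifferentiableOn ℂ g (Set.uIcc (w - R) (w + R) ×ℂ Set.uIcc 0 R)) :
    ∫ x in (w - R)..(w + R), g x = upperRectIntegral g w R := by
  have hcauchy := integral_boundary_rect_eq_zero_of_differentiableOn g (w - R)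
    ((w + R : ℝ) + R * I) (by simpa using hg)
  simp only [sub_re, ofReal_re, add_re, mul_re, I_re, mul_zero, ofReal_im, I_im, mul_one,
    sub_self, add_zero, sub_im, add_im, mul_im, zero_add, smul_eq_mul] at hcauchy
  unfold upperRectIntegral
  push_cast at hcauchy ⊢
  simp only [zero_mul, add_zero] at hcauchy
  linear_combination hcauchy

end upperRectIntegral

theorem integral_inv_ofReal_mul_add {a b : ℝ} {c d : ℂ} (hd : d ≠ 0)
    (hslit : ∀ y ∈ Set.uIcc a b, (y : ℂ) * d + c ∈ slitPlane) :
    ∫ y in a..b, ((y : ℂ) * d + c)⁻¹ = d⁻¹ * (log (b * d + c) - log (a * d + c)) := by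
  have hderiv (y : ℝ) : HasDerivAt (fun y : ℝ => (y : ℂ) * d + c) d y := by
    simpa using (ofRealCLM.hasDerivAt (x := y)).mul_const d |>.add_const c
  have hcont : ContinuousOn (fun y : ℝ => ((y : ℂ) * d + c)⁻¹) (Set.uIcc a b) :=
    (by fun_prop : Continuous fun y : ℝ => (y : ℂ) * d + c).continuousOn.inv₀
      fun y hy => slitPlane_ne_zero (hslit y hy)
  rw [integral_eq_sub_of_hasDerivAt (f := fun y : ℝ => d⁻¹ * log (y * d + c)) (fun y hy => ?_)
    hcont.intervalIntegrable, mul_sub]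
  refine (((hasDerivAt_log (hslit y hy)).comp y (hderiv y)).const_mul d⁻¹).congr_deriv ?_
  field_simp

theorem log_neg_of_im_neg {z : ℂ} (hz : z.im < 0) : log (-z) = log z + Real.pi * I := by
  rw [log, log, norm_neg, arg_neg_eq_arg_add_pi_of_im_neg hz]
  push_cast
  ring

theorem upperRectIntegral_inv_sub {w R : ℝ} (hR : 0 < R) :
    upperRectIntegral (fun z => (z - w)⁻¹) w R = -(Real.pi * I) := by
  -- the left side meets the cut of `log` at `y = 0`, so it is integrated after negation
  have hleft : ∫ y in (0 : ℝ)..R, (((w - R : ℝ) : ℂ) + y * I - w)⁻¹ =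
      -(I * (log (R - R * I) - log R)) := by
    have hneg : (fun y : ℝ => (((w - R : ℝ) : ℂ) + y * I - w)⁻¹) =
        fun y : ℝ => -((y : ℂ) * -I + R)⁻¹ :=
      funext fun y => by rw [← inv_neg]; push_cast; ring_nf
    rw [hneg, integral_neg, integral_inv_ofReal_mul_add (by simp)
      (fun y _ => by simp [mem_slitPlane_iff, hR]), inv_neg, inv_I]
    simp [neg_add_eq_sub]
  have htop : ∫ x in (w - R)..(w + R), ((x : ℂ) + R * I - w)⁻¹ =
      log (R + R * I) - log (-(R - R * I)) := by
    have hshift : (fun x : ℝ => ((x : ℂ) + R * I - w)⁻¹) =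
        fun x : ℝ => ((x : ℂ) * 1 + (R * I - w))⁻¹ :=
      funext fun x => by ring_nf
    rw [hshift, integral_inv_ofReal_mul_add one_ne_zero
      (fun x _ => by simp [mem_slitPlane_iff, hR.ne']), inv_one, one_mul]
    push_cast
    ring_nf
  have hright : ∫ y in (0 : ℝ)..R, (((w + R : ℝ) : ℂ) + y * I - w)⁻¹ =
      -I * (log (R + R * I) - log R) := by
    have hshift : (fun y : ℝ => (((w + R : ℝ) : ℂ) + y * I - w)⁻¹) =
        fun y : ℝ => ((y : ℂ) * I + R)⁻¹ :=
      funext fun y => by push_cast; ring_nf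
    rw [hshift, integral_inv_ofReal_mul_add I_ne_zero
      (fun y _ => by simp [mem_slitPlane_iff, hR]), inv_I]
    simp [add_comm]
  have hlog := log_neg_of_im_neg (z := R - R * I) (by simpa using hR)
  simp only [upperRectIntegral, hleft, htop, hright]
  linear_combination (log (R + R * I) - log R) * I_mul_I - I_mul_I * (log (R - R * I) - log R)
    - hlog

theorem tendsto_upperRectIntegral_mul_inv_sub {f : ℂ → ℂ} {w : ℝ}
    (hf : ContinuousOn f {z | 0 ≤ z.im}) (hdecay : Tendsto (semicircleSup f w) atTop (𝓝 0)) :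
    Tendsto (fun R => upperRectIntegral (fun z => f z * (z - w)⁻¹) w R) atTop (𝓝 0) := by
  refine NormedAddGroup.tendsto_nhds_zero.2 fun ε hε => ?_
  filter_upwards [eventually_norm_le_of_tendsto_semicircleSup hf hdecay
    (by positivity : 0 < ε / 8), eventually_gt_atTop 0] with R hfR hR
  calc ‖upperRectIntegral (fun z => f z * (z - w)⁻¹) w R‖ ≤ 4 * R * (ε / 8 / R) :=
        norm_upperRectIntegral_le hR.le fun z hz => ?_
    _ < ε := by field_simp; linarith
  rw [norm_mul, norm_inv, ← div_eq_mul_inv]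
  exact div_le_div₀ (by positivity) (hfR z hz) hR (mem_halfPlaneOutsideBall.1 hz).2

theorem integral_dslope_eq_upperRectIntegral_add {f : ℂ → ℂ} {w R : ℝ} (hR : 0 < R)
    (hf : ContinuousOn f {z | 0 ≤ z.im})
    (hg : DifferentiableOn ℂ (dslope f w) {z | 0 ≤ z.im}) :
    ∫ x in (w - R)..(w + R), dslope f w x =
      upperRectIntegral (fun z => f z * (z - w)⁻¹) w R + I * Real.pi * f w := by
  have hne : ∀ z ∈ halfPlaneOutsideBall w R, z - w ≠ 0 :=
    fun z hz => norm_pos_iff.1 (hR.trans_le (mem_halfPlaneOutsideBall.1 hz).2)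
  have hinv : ContinuousOn (fun z : ℂ => (z - w)⁻¹) (halfPlaneOutsideBall w R) :=
    (continuousOn_id.sub continuousOn_const).inv₀ hne
  have hrect : Set.uIcc (w - R) (w + R) ×ℂ Set.uIcc 0 R ⊆ {z | 0 ≤ z.im} := fun z hz => by
    have him := hz.2
    rw [Set.uIcc_of_le hR.le] at him
    exact him.1
  rw [integral_eq_upperRectIntegral (hg.mono hrect),
    upperRectIntegral_congr hR.le (g₂ := fun z => f z * (z - w)⁻¹ - f w * (z - w)⁻¹)
      fun z hz => ?_,
    upperRectIntegral_sub (g₁ := fun z => f z * (z - w)⁻¹)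
      (g₂ := fun z => f w * (z - w)⁻¹)
      hR.le ((hf.mono Set.sdiff_subset).mul hinv) (continuousOn_const.mul hinv),
    upperRectIntegral_const_mul, upperRectIntegral_inv_sub hR]
  · ring
  · rw [dslope_of_ne f (sub_ne_zero.1 (hne z hz)), slope_def_field]
    field_simp

theorem tendsto_integral_dslope_atTop {f : ℂ → ℂ} {w : ℝ}
    (hf : ContinuousOn f {z | 0 ≤ z.im}) (hg : DifferentiableOn ℂ (dslope f w) {z | 0 ≤ z.im})
    (hdecay : Tendsto (semicircleSup f w) atTop (𝓝 0)) :
    Tendsto (fun R => ∫ x in (w - R)..(w + R), dslope f w x) atTop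
      (𝓝 (I * Real.pi * f w)) := by
  have h := (tendsto_upperRectIntegral_mul_inv_sub hf hdecay).add_const (I * Real.pi * f w)
  rw [zero_add] at h
  refine h.congr' ?_
  filter_upwards [eventually_gt_atTop 0] with R hR
  exact (integral_dslope_eq_upperRectIntegral_add hR hf hg).symm

theorem pv_integral_upper_half_plane
    (w : ℝ) (f : ℂ → ℂ) (U : Set ℂ) (hU : IsOpen U)
    (hsub : {z : ℂ | 0 ≤ z.im} ⊆ U) (hf : DifferentiableOn ℂ f U)
    (hdecay :
      Tendsto (fun R : ℝ => ⨆ t ∈ Set.Icc (0:ℝ) Real.pi,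
          ‖f (w + R * Complex.exp (I * t))‖) atTop (𝓝 0)) :
    Tendsto
      (fun p : ℝ × ℝ =>
        (∫ x in (w - p.1)..(w - p.2), f x / (x - w)) +
          ∫ x in (w + p.2)..(w + p.1), f x / (x - w))
      (atTop ×ˢ 𝓝[>] 0) (𝓝 (I * Real.pi * f w)) := by
  have hg : DifferentiableOn ℂ (dslope f w) U :=
    (differentiableOn_dslope (hU.mem_nhds (hsub (by simp)))).2 hf
  have hgR : Continuous fun x : ℝ => dslope f w x :=
    hg.continuousOn.comp_continuous continuous_ofReal fun x => hsub (by simp)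
  have hlarge := tendsto_integral_dslope_atTop (hf.continuousOn.mono hsub) (hg.mono hsub) hdecay
  have hsmall := (tendsto_integral_sub_add_nhds_zero hgR.intervalIntegrable w)
    |>.mono_left (nhdsWithin_le_nhds (s := Set.Ioi 0))
  have hlim := (hlarge.comp tendsto_fst).sub (hsmall.comp tendsto_snd)
  rw [sub_zero] at hlim
  refine hlim.congr' ?_
  filter_upwards [prod_mem_prod (Ioi_mem_atTop 0) self_mem_nhdsWithin] with p hp
  exact (pv_integral_eq_integral_dslope_sub f hp.2 hp.1 hgR).symm
end

section
/- Let w ∈ ℝ and let f be a complex function analytic on the closed lower half plane {z : Im z ≤ 0} such that sup_{t ∈ [0,π]} |f(w + R·e^{−it})| → 0 as R → ∞. Then the principal value integral ∫_{-∞}^{∞} f(x)/(x − w) dx exists and equals −iπ·f(w). -/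
/-!
In the coordinates `z = w + exp (-I ζ)`, the closed half annulus `r ≤ |z - w| ≤ R`, `Im z ≤ 0`
is the image of the rectangle `[0, π] × [log r, log R]`, and `f z / (z - w) dz` becomes
`-I f (w + exp (-I ζ)) dζ`. Cauchy's theorem for that rectangle expresses the two real segments
through the two half circles, `-I ∫₀^π f (w + ρ e^{-it}) dt` for `ρ = r` and `ρ = R`. These arc
integrals tend to `-I π f w` as `ρ → 0⁺` by continuity of `f` at `w`, and to `0` as `ρ → ∞` by
the decay hypothesis, in both cases because the integrands converge uniformly.
-/

open Complex intervalIntegral Filter Topology Set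
open scoped Real Interval

theorem TendstoUniformlyOn.of_tendsto_iSup_norm {ι α E : Type*} [NormedAddCommGroup E]
    {F : ι → α → E} {l : Filter ι} {s : Set α}
    (hbdd : ∀ᶠ i in l, BddAbove ((fun x => ‖F i x‖) '' s))
    (h : Tendsto (fun i => ⨆ x ∈ s, ‖F i x‖) l (𝓝 0)) : TendstoUniformlyOn F 0 l s := by
  rw [Metric.tendstoUniformlyOn_iff]
  intro ε hε
  filter_upwards [hbdd, h.eventually (gt_mem_nhds hε)] with i hbddi hlt x hx
  rw [Pi.zero_apply, dist_zero_left]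
  refine (le_ciSup₂ (f := fun x (_ : x ∈ s) => ‖F i x‖) (hbddi.mono ?_) x hx).trans_lt hlt
  rintro _ ⟨_, ⟨y, rfl⟩, ⟨hy, rfl⟩⟩
  exact mem_image_of_mem _ hy

theorem exp_neg_I_mul_add_mul_I (x y : ℝ) :
    exp (-I * (x + y * I)) = Real.exp y * exp (-I * x) := by
  rw [ofReal_exp, ← exp_add]
  congr 1
  ring_nf
  rw [I_sq]
  ring

theorem im_add_exp_neg_I_mul_nonpos (w : ℝ) {z : ℂ} (hz : z.re ∈ Icc 0 π) :
    ((w : ℂ) + exp (-I * z)).im ≤ 0 := by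
  have him : ((w : ℂ) + exp (-I * z)).im = -(Real.exp z.im * Real.sin z.re) := by
    simp [exp_im]
  rw [him, neg_nonpos]
  exact mul_nonneg (Real.exp_pos _).le (Real.sin_nonneg_of_nonneg_of_le_pi hz.1 hz.2)

theorem im_add_mul_exp_neg_I_mul_nonpos (w : ℝ) {ρ t : ℝ} (hρ : 0 ≤ ρ) (ht : t ∈ Icc 0 π) :
    ((w : ℂ) + ρ * exp (-I * t)).im ≤ 0 := by
  have him : ((w : ℂ) + ρ * exp (-I * t)).im = -(ρ * Real.sin t) := by
    simp [exp_im]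
  rw [him, neg_nonpos]
  exact mul_nonneg hρ (Real.sin_nonneg_of_nonneg_of_le_pi ht.1 ht.2)

theorem integral_div_sub_eq_integral_add_exp {f : ℂ → ℂ} (w : ℝ)
    (hf : Continuous fun x : ℝ => f x) {r R : ℝ} (hr : 0 < r) (hR : 0 < R) :
    ∫ x in (w + r)..(w + R), f x / (x - w) = ∫ y in Real.log r..Real.log R, f (w + Real.exp y) := by
  have hsubst := integral_deriv_smul_comp' (a := Real.log r) (b := Real.log R)
    (f := fun y => w + Real.exp y) (f' := Real.exp) (g := fun x : ℝ => f x / ((x : ℂ) - w))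
    (fun y _ => (Real.hasDerivAt_exp y).const_add w) Real.continuous_exp.continuousOn
    (by
      refine hf.continuousOn.div (by fun_prop) ?_
      rintro _ ⟨y, -, rfl⟩
      simp)
  simp only [Real.exp_log hr, Real.exp_log hR] at hsubst
  rw [← hsubst]
  refine integral_congr fun y _ => ?_
  have : (Real.exp y : ℂ) ≠ 0 := ofReal_ne_zero.mpr (Real.exp_pos y).ne'
  simp only [Function.comp_apply, ofReal_add, add_sub_cancel_left, real_smul]
  field_simp

theorem integral_div_sub_eq_neg_integral_sub_exp {f : ℂ → ℂ} (w : ℝ)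
    (hf : Continuous fun x : ℝ => f x) {r R : ℝ} (hr : 0 < r) (hR : 0 < R) :
    ∫ x in (w - R)..(w - r), f x / (x - w) =
      -∫ y in Real.log r..Real.log R, f (w - Real.exp y) := by
  have hsubst := integral_deriv_smul_comp' (a := Real.log R) (b := Real.log r)
    (f := fun y => w - Real.exp y) (f' := fun y => -Real.exp y)
    (g := fun x : ℝ => f x / ((x : ℂ) - w))
    (fun y _ => (Real.hasDerivAt_exp y).const_sub w) Real.continuous_exp.neg.continuousOn
    (by
      refine hf.continuousOn.div (by fun_prop) ?_
      rintro _ ⟨y, -, rfl⟩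
      simp)
  simp only [Real.exp_log hr, Real.exp_log hR] at hsubst
  rw [← hsubst, integral_symm]
  congr 1
  refine integral_congr fun y _ => ?_
  have : (Real.exp y : ℂ) ≠ 0 := ofReal_ne_zero.mpr (Real.exp_pos y).ne'
  simp only [Function.comp_apply, ofReal_sub, sub_sub_cancel_left, real_smul, ofReal_neg]
  field_simp

/-- `-I * lowerArcIntegral f w ρ` is the integral of `f z / (z - w) dz` over the half circle of
radius `ρ` around `w` in the lower half plane, run from `w + ρ` to `w - ρ`. -/
noncomputable def lowerArcIntegral (f : ℂ → ℂ) (w : ℂ) (ρ : ℝ) : ℂ :=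
  ∫ t in (0 : ℝ)..π, f (w + ρ * exp (-I * t))

theorem lowerArcIntegral_sub_lowerArcIntegral {f : ℂ → ℂ} (w : ℝ)
    (hf : ∀ z : ℂ, z.im ≤ 0 → DifferentiableAt ℂ f z) {r R : ℝ} (hr : 0 < r) (hR : 0 < R) :
    lowerArcIntegral f w r - lowerArcIntegral f w R =
      I * ((∫ y in Real.log r..Real.log R, f (w + Real.exp y)) -
        ∫ y in Real.log r..Real.log R, f (w - Real.exp y)) := by
  have hrect := integral_boundary_rect_eq_zero_of_differentiableOn
    (fun z => f (w + exp (-I * z))) ⟨0, Real.log r⟩ ⟨π, Real.log R⟩ fun z hz =>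
      ((hf _ (im_add_exp_neg_I_mul_nonpos w (by simpa [Real.pi_nonneg] using hz.1))).comp z
        (by fun_prop)).differentiableWithinAt
  have hπ : exp (-I * π) = -1 := by
    rw [neg_mul, mul_comm, exp_neg, exp_pi_mul_I, inv_neg, inv_one]
  simp only [exp_neg_I_mul_add_mul_I, Real.exp_log hr, Real.exp_log hR, hπ, smul_eq_mul] at hrect
  simp only [ofReal_zero, mul_zero, exp_zero, mul_one, mul_neg_one, ← sub_eq_add_neg] at hrect
  rw [lowerArcIntegral, lowerArcIntegral]
  linear_combination hrect

theorem continuousOn_lowerArc {f : ℂ → ℂ} (w : ℝ) (hf : ∀ z : ℂ, z.im ≤ 0 → ContinuousAt f z)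
    {ρ : ℝ} (hρ : 0 ≤ ρ) : ContinuousOn (fun t : ℝ => f (w + ρ * exp (-I * t))) [[0, π]] := by
  intro t ht
  rw [uIcc_of_le Real.pi_nonneg] at ht
  exact ContinuousAt.continuousWithinAt <| (hf _ (im_add_mul_exp_neg_I_mul_nonpos w hρ ht)).comp
    (f := fun t : ℝ => (w : ℂ) + ρ * exp (-I * t)) (by fun_prop)

theorem tendsto_lowerArcIntegral_atTop {f : ℂ → ℂ} (w : ℝ)
    (hf : ∀ z : ℂ, z.im ≤ 0 → ContinuousAt f z)
    (hdecay : Tendsto (fun R : ℝ => ⨆ t ∈ Icc (0 : ℝ) π, ‖f (w + R * exp (-I * t))‖) atTop (𝓝 0)) :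
    Tendsto (lowerArcIntegral f w) atTop (𝓝 0) := by
  have hcont : ∀ᶠ R : ℝ in atTop, ContinuousOn (fun t : ℝ => f (w + R * exp (-I * t))) [[0, π]] :=
    (eventually_ge_atTop 0).mono fun R hR => continuousOn_lowerArc w hf hR
  have hunif : TendstoUniformlyOn (fun (R t : ℝ) => f (w + R * exp (-I * t))) 0 atTop [[0, π]] := by
    rw [uIcc_of_le Real.pi_nonneg] at hcont ⊢
    exact .of_tendsto_iSup_norm (hcont.mono fun R hR => isCompact_Icc.bddAbove_image hR.norm)
      hdecay
  unfold lowerArcIntegral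
  simpa using hunif.tendsto_intervalIntegral_of_continuousOn (μ := MeasureTheory.volume) hcont

theorem tendsto_lowerArcIntegral_nhdsGT_zero {f : ℂ → ℂ} (w : ℝ)
    (hf : ∀ z : ℂ, z.im ≤ 0 → ContinuousAt f z) :
    Tendsto (lowerArcIntegral f w) (𝓝[>] 0) (𝓝 (π * f w)) := by
  have hcont : ∀ᶠ ρ : ℝ in 𝓝[>] 0, ContinuousOn (fun t : ℝ => f (w + ρ * exp (-I * t))) [[0, π]] :=
    eventually_mem_nhdsWithin.mono fun ρ hρ => continuousOn_lowerArc w hf (le_of_lt hρ)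
  have harc : Tendsto (fun q : ℝ × ℝ => (w : ℂ) + q.1 * exp (-I * q.2))
      (𝓝[>] 0 ×ˢ 𝓟 [[0, π]]) (𝓝 w) := by
    rw [tendsto_iff_norm_sub_tendsto_zero]
    have hradius : Tendsto (fun q : ℝ × ℝ => q.1) (𝓝[>] 0 ×ˢ 𝓟 [[0, π]]) (𝓝 0) :=
      tendsto_nhdsWithin_of_tendsto_nhds tendsto_id |>.comp tendsto_fst
    simpa [norm_exp] using hradius.norm
  have hunif : TendstoUniformlyOn (fun (ρ t : ℝ) => f (w + ρ * exp (-I * t))) (fun _ => f w)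
      (𝓝[>] 0) [[0, π]] := by
    rw [tendstoUniformlyOn_iff_tendsto]
    exact (tendsto_const_nhds.prodMk_nhds ((hf w (by simp)).tendsto.comp harc)).mono_right
      (nhds_le_uniformity _)
  unfold lowerArcIntegral
  simpa using hunif.tendsto_intervalIntegral_of_continuousOn (μ := MeasureTheory.volume) hcont

theorem pv_integral_lower_half_plane
    (w : ℝ) (f : ℂ → ℂ) (U : Set ℂ) (hU : IsOpen U)
    (hsub : {z : ℂ | z.im ≤ 0} ⊆ U) (hf : DifferentiableOn ℂ f U)
    (hdecay :
      Tendsto (fun R : ℝ => ⨆ t ∈ Set.Icc (0:ℝ) Real.pi,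
          ‖f (w + R * Complex.exp (-I * t))‖) atTop (𝓝 0)) :
    Tendsto
      (fun p : ℝ × ℝ =>
        (∫ x in (w - p.1)..(w - p.2), f x / (x - w)) +
          ∫ x in (w + p.2)..(w + p.1), f x / (x - w))
      (atTop ×ˢ 𝓝[>] 0) (𝓝 (-(I * Real.pi) * f w)) := by
  have hdiff : ∀ z : ℂ, z.im ≤ 0 → DifferentiableAt ℂ f z := fun z hz =>
    hf.differentiableAt (hU.mem_nhds (hsub hz))
  have hcont : ∀ z : ℂ, z.im ≤ 0 → ContinuousAt f z := fun z hz => (hdiff z hz).continuousAt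
  have hreal : Continuous fun x : ℝ => f x := continuous_iff_continuousAt.2 fun x =>
    (hcont x (by simp)).comp continuous_ofReal.continuousAt
  have hpv : ∀ R r : ℝ, 0 < R → 0 < r →
      ((∫ x in (w - R)..(w - r), f x / (x - w)) + ∫ x in (w + r)..(w + R), f x / (x - w)) =
        -I * (lowerArcIntegral f w r - lowerArcIntegral f w R) := by
    intro R r hR hr
    rw [integral_div_sub_eq_neg_integral_sub_exp w hreal hr hR,
      integral_div_sub_eq_integral_add_exp w hreal hr hR,
      lowerArcIntegral_sub_lowerArcIntegral w hdiff hr hR]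
    rw [← mul_assoc, neg_mul, I_mul_I]
    ring
  have hlim := (((tendsto_lowerArcIntegral_nhdsGT_zero w hcont).comp tendsto_snd).sub
    ((tendsto_lowerArcIntegral_atTop w hcont hdecay).comp tendsto_fst)).const_mul (-I)
  rw [sub_zero, ← mul_assoc, neg_mul] at hlim
  refine hlim.congr' ?_
  filter_upwards [(eventually_gt_atTop 0).prod_inl _, eventually_mem_nhdsWithin.prod_inr _]
    with p hR hr
  exact (hpv p.1 p.2 hR hr).symm
end

section
/- For every w ∈ ℝ, the principal value of ∫_{-∞}^{∞} e^{ix}/(x − w) dx equals iπ·e^{iw}. -/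
/-!
Substituting `x = w ∓ s` in the two halves and using
`e^{i(w+s)} - e^{i(w-s)} = 2i e^{iw} sin s`, the truncated principal value equals
`2i e^{iw} ∫_r^R sin s / s`, so everything reduces to Dirichlet's integral
`∫_0^∞ sin s / s = π / 2`. For the latter, write `1 / x = ∫_0^∞ e^{-tx} dt` and swap the
integrals: `∫_0^R sin x / x = ∫_0^∞ (1 - e^{-tR} (cos R + t sin R)) / (1 + t²) dt`, where the
remainder is at most `∫_0^∞ e^{-tR} dt = 1 / R`.
-/

namespace Real

open Filter Topology MeasureTheory Set

theorem integrableOn_exp_neg_mul_Ioi_zero {a : ℝ} (ha : 0 < a) :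
    IntegrableOn (fun t ↦ exp (-t * a)) (Ioi 0) := by
  simpa only [neg_mul, mul_comm a] using exp_neg_integrableOn_Ioi 0 ha

theorem integral_exp_neg_mul_Ioi_zero {a : ℝ} (ha : 0 < a) :
    ∫ t in Ioi (0 : ℝ), exp (-t * a) = a⁻¹ := by
  simp_rw [neg_mul, mul_comm _ a, ← neg_mul]
  rw [integral_exp_mul_Ioi (neg_neg_iff_pos.2 ha)]
  simp [div_neg, neg_div]

theorem integral_exp_neg_mul_mul_sin (t R : ℝ) :
    ∫ x in (0 : ℝ)..R, exp (-t * x) * sin x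
      = (1 - exp (-t * R) * (cos R + t * sin R)) / (1 + t ^ 2) := by
  have hderiv : ∀ x : ℝ,
      HasDerivAt (fun x ↦ -(exp (-t * x) * (cos x + t * sin x)) / (1 + t ^ 2))
        (exp (-t * x) * sin x) x := by
    intro x
    have he : HasDerivAt (fun x ↦ exp (-t * x)) (exp (-t * x) * -t) x := by
      simpa using ((hasDerivAt_id x).const_mul (-t)).exp
    have hcs : HasDerivAt (fun x ↦ cos x + t * sin x) (-sin x + t * cos x) x :=
      (hasDerivAt_cos x).add ((hasDerivAt_sin x).const_mul t)
    refine ((he.mul hcs).neg.div_const (1 + t ^ 2)).congr_deriv ?_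
    field_simp
    ring
  rw [intervalIntegral.integral_eq_sub_of_hasDerivAt (fun x _ ↦ hderiv x)
    (Continuous.intervalIntegrable (by fun_prop) _ _)]
  field_simp
  simp only [mul_zero, neg_zero, exp_zero, cos_zero, sin_zero, add_zero, mul_one, sub_neg_eq_add]
  ring

theorem abs_cos_add_mul_sin_le (t R : ℝ) : |cos R + t * sin R| ≤ 1 + t ^ 2 := by
  refine abs_le_of_sq_le_sq ?_ (by positivity)
  -- `(cos R + t sin R)² + (t cos R - sin R)² = 1 + t²`
  nlinarith [sq_nonneg (t * cos R - sin R), sin_sq_add_cos_sq R, sq_nonneg t]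

theorem integrable_exp_neg_mul_mul_sin_prod (R : ℝ) :
    Integrable (fun p : ℝ × ℝ ↦ exp (-p.2 * p.1) * sin p.1)
      ((volume.restrict (Ioc 0 R)).prod (volume.restrict (Ioi 0))) := by
  have hmeas : AEStronglyMeasurable (fun p : ℝ × ℝ ↦ exp (-p.2 * p.1) * sin p.1)
      ((volume.restrict (Ioc 0 R)).prod (volume.restrict (Ioi 0))) :=
    Continuous.aestronglyMeasurable (by fun_prop)
  refine (integrable_prod_iff hmeas).2 ⟨?_, ?_⟩
  · filter_upwards [ae_restrict_mem measurableSet_Ioc] with x hx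
    exact (integrableOn_exp_neg_mul_Ioi_zero hx.1).mul_const _
  · refine Integrable.mono' (g := fun _ ↦ 1) (integrableOn_const measure_Ioc_lt_top.ne)
      hmeas.norm.integral_prod_right' ?_
    filter_upwards [ae_restrict_mem measurableSet_Ioc] with x hx
    have hnorm : ∫ t in Ioi 0, ‖exp (-t * x) * sin x‖ = |sinc x| := by
      simp only [norm_mul, norm_eq_abs, abs_exp]
      rw [integral_mul_const, integral_exp_neg_mul_Ioi_zero hx.1, sinc_of_ne_zero hx.1.ne',
        abs_div, abs_of_pos hx.1, inv_mul_eq_div]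
    rw [norm_eq_abs, hnorm, abs_abs]
    exact abs_sinc_le_one x

theorem integral_sinc_eq_integral_Ioi {R : ℝ} (hR : 0 ≤ R) :
    ∫ x in (0 : ℝ)..R, sinc x
      = ∫ t in Ioi 0, ∫ x in (0 : ℝ)..R, exp (-t * x) * sin x := by
  calc ∫ x in (0 : ℝ)..R, sinc x
      = ∫ x in Ioc 0 R, ∫ t in Ioi 0, exp (-t * x) * sin x := by
        rw [intervalIntegral.integral_of_le hR]
        refine setIntegral_congr_fun measurableSet_Ioc fun x hx ↦ ?_
        rw [integral_mul_const, integral_exp_neg_mul_Ioi_zero hx.1, sinc_of_ne_zero hx.1.ne',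
          inv_mul_eq_div]
    _ = ∫ t in Ioi 0, ∫ x in Ioc 0 R, exp (-t * x) * sin x :=
        integral_integral_swap (integrable_exp_neg_mul_mul_sin_prod R)
    _ = ∫ t in Ioi 0, ∫ x in (0 : ℝ)..R, exp (-t * x) * sin x := by
        simp_rw [intervalIntegral.integral_of_le hR]

theorem norm_exp_neg_mul_mul_cos_add_mul_sin_div_le (t R : ℝ) :
    ‖exp (-t * R) * (cos R + t * sin R) / (1 + t ^ 2)‖ ≤ exp (-t * R) := by
  rw [norm_div, norm_mul, norm_of_nonneg (exp_nonneg _), norm_eq_abs, norm_eq_abs,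
    abs_of_pos (by positivity : (0 : ℝ) < 1 + t ^ 2), div_le_iff₀ (by positivity)]
  gcongr
  exact abs_cos_add_mul_sin_le t R

theorem integrableOn_exp_neg_mul_mul_cos_add_mul_sin_div {R : ℝ} (hR : 0 < R) :
    IntegrableOn (fun t ↦ exp (-t * R) * (cos R + t * sin R) / (1 + t ^ 2)) (Ioi 0) :=
  (integrableOn_exp_neg_mul_Ioi_zero hR).mono' (Continuous.aestronglyMeasurable
    (by fun_prop (disch := intros; positivity)))
    (ae_of_all _ fun t ↦ norm_exp_neg_mul_mul_cos_add_mul_sin_div_le t R)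

theorem tendsto_integral_exp_neg_mul_mul_cos_add_mul_sin_div :
    Tendsto (fun R ↦ ∫ t in Ioi 0, exp (-t * R) * (cos R + t * sin R) / (1 + t ^ 2))
      atTop (𝓝 0) := by
  refine squeeze_zero_norm' ?_ tendsto_inv_atTop_zero
  filter_upwards [eventually_gt_atTop 0] with R hR
  calc ‖∫ t in Ioi 0, exp (-t * R) * (cos R + t * sin R) / (1 + t ^ 2)‖
      ≤ ∫ t in Ioi 0, exp (-t * R) := norm_integral_le_of_norm_le
        (integrableOn_exp_neg_mul_Ioi_zero hR)
        (ae_of_all _ fun t ↦ norm_exp_neg_mul_mul_cos_add_mul_sin_div_le t R)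
    _ = R⁻¹ := integral_exp_neg_mul_Ioi_zero hR

theorem integral_sinc_eq_pi_div_two_sub {R : ℝ} (hR : 0 < R) :
    ∫ x in (0 : ℝ)..R, sinc x
      = π / 2 - ∫ t in Ioi 0, exp (-t * R) * (cos R + t * sin R) / (1 + t ^ 2) := by
  simp_rw [integral_sinc_eq_integral_Ioi hR.le, integral_exp_neg_mul_mul_sin, sub_div, one_div]
  rw [integral_sub integrable_inv_one_add_sq.integrableOn
    (integrableOn_exp_neg_mul_mul_cos_add_mul_sin_div hR), integral_Ioi_inv_one_add_sq,
    arctan_zero, sub_zero]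

theorem tendsto_integral_sinc_atTop :
    Tendsto (fun R ↦ ∫ x in (0 : ℝ)..R, sinc x) atTop (𝓝 (π / 2)) := by
  have h := tendsto_integral_exp_neg_mul_mul_cos_add_mul_sin_div.const_sub (π / 2)
  rw [sub_zero] at h
  exact h.congr' <| (eventually_gt_atTop 0).mono fun R hR ↦
    (integral_sinc_eq_pi_div_two_sub hR).symm

theorem tendsto_integral_sinc_atTop_nhds_zero :
    Tendsto (fun p : ℝ × ℝ ↦ ∫ x in p.2..p.1, sinc x) (atTop ×ˢ 𝓝 0)
      (𝓝 (π / 2)) := by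
  have hprim : Continuous fun r ↦ ∫ x in (0 : ℝ)..r, sinc x :=
    intervalIntegral.continuous_primitive (continuous_sinc.intervalIntegrable ·) 0
  have h := (tendsto_integral_sinc_atTop.comp tendsto_fst).sub
    ((hprim.tendsto 0).comp (tendsto_snd (f := atTop)))
  simp only [intervalIntegral.integral_same, sub_zero] at h
  refine h.congr fun p ↦ ?_
  exact intervalIntegral.integral_interval_sub_left (continuous_sinc.intervalIntegrable _ _)
    (continuous_sinc.intervalIntegrable _ _)

end Real

open Complex intervalIntegral Filter Topology

theorem exp_mul_I_add_sub_exp_mul_I_sub (w s : ℂ) :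
    exp (I * (w + s)) - exp (I * (w - s)) = 2 * I * exp (I * w) * sin s := by
  rw [sin, mul_add, mul_sub, exp_add, exp_sub, neg_mul, exp_neg, mul_comm s I]
  field_simp
  ring_nf
  rw [I_sq]
  ring

theorem continuousOn_exp_mul_I_div_sub (w : ℝ) :
    ContinuousOn (fun x : ℝ ↦ exp (I * x) / (x - w)) {w}ᶜ :=
  ContinuousOn.div (by fun_prop) (by fun_prop) fun _ hx ↦
    sub_ne_zero.2 (ofReal_injective.ne hx)

theorem integral_exp_mul_I_div_sub_add_integral_eq (w : ℝ) {r R : ℝ} (hr : 0 < r)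
    (hR : 0 < R) :
    (∫ x in (w - R)..(w - r), exp (I * x) / (x - w)) +
        ∫ x in (w + r)..(w + R), exp (I * x) / (x - w)
      = 2 * I * exp (I * w) * ((∫ s in r..R, Real.sinc s : ℝ) : ℂ) := by
  set f : ℝ → ℂ := fun x ↦ exp (I * x) / (x - w)
  have hpos : ∀ s ∈ Set.uIcc r R, 0 < s := fun s hs ↦ (lt_min hr hR).trans_le hs.1
  have hint : ∀ g : ℝ → ℝ, Continuous g → (∀ s ∈ Set.uIcc r R, g s ≠ w) →
      IntervalIntegrable (fun s ↦ f (g s)) MeasureTheory.volume r R := fun g hg hgw ↦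
    ((continuousOn_exp_mul_I_div_sub w).comp hg.continuousOn hgw).intervalIntegrable
  rw [← integral_comp_sub_left f w, ← integral_comp_add_left f w,
    ← integral_add (hint _ (by fun_prop) fun s hs ↦ (sub_lt_self w (hpos s hs)).ne)
      (hint _ (by fun_prop) fun s hs ↦ (lt_add_of_pos_right w (hpos s hs)).ne'),
    ← integral_ofReal, ← integral_const_mul]
  refine integral_congr fun s hs ↦ ?_
  have hs0 : (s : ℂ) ≠ 0 := ofReal_ne_zero.2 (hpos s hs).ne'
  simp only [f, Real.sinc_of_ne_zero (hpos s hs).ne', ofReal_div, ofReal_sin, ofReal_sub,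
    ofReal_add, sub_sub_cancel_left, add_sub_cancel_left]
  field_simp
  linear_combination exp_mul_I_add_sub_exp_mul_I_sub w s

theorem pv_exp_over_x_sub_w (w : ℝ) :
    Tendsto
      (fun p : ℝ × ℝ =>
        (∫ x in (w - p.1)..(w - p.2), Complex.exp (I * x) / (x - w)) +
          ∫ x in (w + p.2)..(w + p.1), Complex.exp (I * x) / (x - w))
      (atTop ×ˢ 𝓝[>] 0) (𝓝 (I * Real.pi * Complex.exp (I * w))) := by
  have hsinc : Tendsto (fun p : ℝ × ℝ ↦ ∫ s in p.2..p.1, Real.sinc s)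
      (atTop ×ˢ 𝓝[>] 0) (𝓝 (Real.pi / 2)) :=
    Real.tendsto_integral_sinc_atTop_nhds_zero.mono_left (prod_mono le_rfl nhdsWithin_le_nhds)
  have hpos : ∀ᶠ p : ℝ × ℝ in atTop ×ˢ 𝓝[>] 0, 0 < p.1 ∧ 0 < p.2 :=
    (eventually_gt_atTop 0).prod_mk self_mem_nhdsWithin
  convert (((continuous_ofReal.tendsto _).comp hsinc).const_mul (2 * I * exp (I * w))).congr'
    (hpos.mono fun p hp ↦ (integral_exp_mul_I_div_sub_add_integral_eq w hp.2 hp.1).symm) using 2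
  push_cast
  ring
end
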